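/- Let n ≥ 3 be an integer and m = 2^{n−1}+2^{n−3}. The diameter of the mixed graph BDM(2,m) is exactly 2n: for every ordered pair (u,v) of vertices there is a directed walk of length at most 2n from u to v in the associated digraph, and there exists an ordered pair of vertices whose distance is exactly 2n. -/

import Mathlib

/-- Vertices of `BDM(2,m)`: `(α, i)_β` is encoded as `(α, i, β)` with `α β : Bool`, `i : ZMod m`. -/
abbrev BDMVertex (m : ℕ) := Bool × ZMod m × Bool

/-- The unique out-neighbour (through an arc) of a vertex of `BDM(2,m)`. -/
def bdmOut (m : ℕ) : BDMVertex m → BDMVertex m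
  | (false, i, false) => (true, 2 * i, true)
  | (false, i, true) => (true, 2 * i + 1, false)
  | (true, i, false) => (false, -2 * i - 1, true)
  | (true, i, true) => (false, -2 * i - 2, false)

/-- The edges of `BDM(2,m)`: `(α,i)_0 ∼ (α,i)_1`. -/
def bdmEdge (m : ℕ) (u v : BDMVertex m) : Prop :=
  u.1 = v.1 ∧ u.2.1 = v.2.1 ∧ u.2.2 = !v.2.2

/-- The arcs of `BDM(2,m)`. -/
def bdmArc (m : ℕ) (u v : BDMVertex m) : Prop := v = bdmOut m u

/-- One step in the associated digraph of `BDM(2,m)` (edge or arc). -/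
def bdmStep (m : ℕ) (u v : BDMVertex m) : Prop := bdmEdge m u v ∨ bdmArc m u v

/-- `hasWalk step d u v` : there is a directed walk of length `d` from `u` to `v`. -/
def hasWalk {V : Type*} (step : V → V → Prop) : ℕ → V → V → Prop
  | 0, u, v => u = v
  | d + 1, u, v => ∃ w, step u w ∧ hasWalk step d w v

/-! Reducing coordinates modulo `M` maps `BDM(2,2M)` onto `BDM(2,M)` compatibly with edges and
arcs, and two vertices of `BDM(2,2M)` have the same arc-image exactly when they have the same
image in `BDM(2,M)`. Every vertex or its edge-mate is an arc-image, so lifting a walk from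
`BDM(2,M)` and appending one arc and possibly one edge shows that doubling `M` raises the
diameter by at most 2. For even modulus no arc enters the edge-mate of an arc-image (by parity),
so a walk from `(0,0)_0` to `bdmFlip (bdmOut x)` ends with the arc into `bdmOut x` followed by the
edge, and projecting the rest gives a walk to the image of `x`: doubling `M` also raises that
distance by 2. Since `m = 5 · 2^(n-3)`, both bounds follow from the case `m = 5`, decided by
computation. -/

namespace ZMod

theorem exists_eq_two_mul_or_eq_two_mul_add_one {m : ℕ} (j : ZMod m) :
    ∃ q, j = 2 * q ∨ j = 2 * q + 1 := by
  obtain ⟨q, hq | hq⟩ := Int.even_or_odd' (cast j : ℤ)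
  · exact ⟨q, .inl (by rw [← intCast_zmod_cast j, hq]; push_cast; ring)⟩
  · exact ⟨q, .inr (by rw [← intCast_zmod_cast j, hq]; push_cast; ring)⟩

theorem two_mul_eq_two_mul_iff {M : ℕ} (a b : ZMod (2 * M)) :
    2 * a = 2 * b ↔
      castHom (dvd_mul_left M 2) (ZMod M) a = castHom (dvd_mul_left M 2) (ZMod M) b := by
  obtain ⟨k, hk⟩ := intCast_surjective (a - b)
  rw [← sub_eq_zero, ← mul_sub, ← sub_eq_zero (a := castHom _ _ a), ← map_sub, ← hk,
    map_intCast, intCast_zmod_eq_zero_iff_dvd, ← Int.cast_ofNat, ← Int.cast_mul,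
    intCast_zmod_eq_zero_iff_dvd]
  push_cast
  exact mul_dvd_mul_iff_left two_ne_zero

theorem two_mul_ne_two_mul_add_one {m : ℕ} (hm : 2 ∣ m) (a b : ZMod m) :
    2 * a ≠ 2 * b + 1 := by
  intro h
  have h2 := congrArg (castHom hm (ZMod 2)) h
  simp only [map_add, map_mul, map_ofNat, map_one] at h2
  rw [show (2 : ZMod 2) = 0 from rfl] at h2
  simp at h2

end ZMod

section Walks

variable {V W : Type*} {s : V → V → Prop} {t : W → W → Prop}

theorem hasWalk_succ' {d : ℕ} {u v : V} :
    hasWalk s (d + 1) u v ↔ ∃ w, hasWalk s d u w ∧ s w v := by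
  induction d generalizing u with
  | zero => simp [hasWalk]
  | succ d ih =>
    simp only [hasWalk] at ih ⊢
    simp only [ih]
    grind

theorem hasWalk.map (f : V → W) (hf : ∀ x y, s x y → t (f x) (f y)) :
    ∀ {d : ℕ} {u v : V}, hasWalk s d u v → hasWalk t d (f u) (f v)
  | 0, _, _, h => congrArg f h
  | _ + 1, _, _, ⟨w, hs, h⟩ => ⟨f w, hf _ _ hs, h.map f hf⟩

theorem hasWalk.lift (f : V → W) (hf : ∀ x y', t (f x) y' → ∃ y, s x y ∧ f y = y') :
    ∀ {d : ℕ} {u : V} {v' : W}, hasWalk t d (f u) v' → ∃ v, hasWalk s d u v ∧ f v = v'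
  | 0, u, _, h => ⟨u, rfl, h⟩
  | _ + 1, _, _, ⟨_, hs, h⟩ => by
    obtain ⟨y, hy, rfl⟩ := hf _ _ hs
    obtain ⟨v, hv, rfl⟩ := h.lift f hf
    exact ⟨v, ⟨y, hy, hv⟩, rfl⟩

end Walks

def bdmFlip {m : ℕ} (v : BDMVertex m) : BDMVertex m := (v.1, v.2.1, !v.2.2)

@[simp]
theorem bdmFlip_bdmFlip {m : ℕ} (v : BDMVertex m) : bdmFlip (bdmFlip v) = v := by
  simp [bdmFlip]

theorem bdmStep_iff {m : ℕ} {u v : BDMVertex m} :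
    bdmStep m u v ↔ v = bdmFlip u ∨ v = bdmOut m u := by
  obtain ⟨α, i, β⟩ := u
  obtain ⟨α', i', β'⟩ := v
  simp only [bdmStep, bdmEdge, bdmArc, bdmFlip, Prod.mk.injEq]
  cases β <;> cases β' <;> simp [eq_comm]

theorem hasWalk_bdmStep_succ {m d : ℕ} {u v : BDMVertex m} :
    hasWalk (bdmStep m) (d + 1) u v ↔
      hasWalk (bdmStep m) d (bdmFlip u) v ∨ hasWalk (bdmStep m) d (bdmOut m u) v := by
  simp [hasWalk, bdmStep_iff]

instance instDecidableHasWalkBdmStep (m : ℕ) :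
    (d : ℕ) → (u v : BDMVertex m) → Decidable (hasWalk (bdmStep m) d u v)
  | 0, u, v => inferInstanceAs (Decidable (u = v))
  | d + 1, u, v =>
    haveI := instDecidableHasWalkBdmStep m d (bdmFlip u) v
    haveI := instDecidableHasWalkBdmStep m d (bdmOut m u) v
    decidable_of_iff _ hasWalk_bdmStep_succ.symm

def bdmProj {m n : ℕ} (h : m ∣ n) (v : BDMVertex n) : BDMVertex m :=
  (v.1, ZMod.castHom h (ZMod m) v.2.1, v.2.2)

theorem bdmProj_surjective {m n : ℕ} (h : m ∣ n) : Function.Surjective (bdmProj h) := by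
  rintro ⟨α, i, β⟩
  obtain ⟨j, rfl⟩ := ZMod.castHom_surjective h i
  exact ⟨(α, j, β), rfl⟩

theorem bdmOut_bdmProj {m n : ℕ} (h : m ∣ n) (v : BDMVertex n) :
    bdmOut m (bdmProj h v) = bdmProj h (bdmOut n v) := by
  obtain ⟨α, i, β⟩ := v
  cases α <;> cases β <;> simp [bdmOut, bdmProj, -ZMod.castHom_apply, map_ofNat]

theorem bdmStep_bdmProj {m n : ℕ} (h : m ∣ n) {u v : BDMVertex n} (huv : bdmStep n u v) :
    bdmStep m (bdmProj h u) (bdmProj h v) := by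
  rcases bdmStep_iff.1 huv with rfl | rfl
  · exact bdmStep_iff.2 (Or.inl rfl)
  · exact bdmStep_iff.2 (Or.inr (bdmOut_bdmProj h u).symm)

theorem exists_bdmStep_of_bdmStep_bdmProj {m n : ℕ} (h : m ∣ n) {u : BDMVertex n}
    {v' : BDMVertex m} (huv : bdmStep m (bdmProj h u) v') :
    ∃ v, bdmStep n u v ∧ bdmProj h v = v' := by
  rcases bdmStep_iff.1 huv with rfl | rfl
  · exact ⟨bdmFlip u, bdmStep_iff.2 (Or.inl rfl), rfl⟩
  · exact ⟨bdmOut n u, bdmStep_iff.2 (Or.inr rfl), (bdmOut_bdmProj h u).symm⟩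

theorem bdmOut_eq_bdmOut_iff {M : ℕ} (x y : BDMVertex (2 * M)) :
    bdmOut (2 * M) x = bdmOut (2 * M) y ↔
      bdmProj (dvd_mul_left M 2) x = bdmProj (dvd_mul_left M 2) y := by
  obtain ⟨α, a, β⟩ := x
  obtain ⟨α', b, β'⟩ := y
  cases α <;> cases β <;> cases α' <;> cases β' <;>
    simp [bdmOut, bdmProj, -ZMod.castHom_apply, ZMod.two_mul_eq_two_mul_iff]

theorem bdmOut_ne_bdmFlip_bdmOut {m : ℕ} (hm : 2 ∣ m) (p q : BDMVertex m) :
    bdmOut m p ≠ bdmFlip (bdmOut m q) := by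
  obtain ⟨α, a, β⟩ := p
  obtain ⟨α', b, β'⟩ := q
  intro h
  cases α <;> cases β <;> cases α' <;> cases β' <;>
    simp only [bdmOut, bdmFlip, Prod.mk.injEq, Bool.not_true, Bool.not_false, Bool.true_eq_false,
      Bool.false_eq_true, and_false, false_and, and_true, true_and] at h
  · exact ZMod.two_mul_ne_two_mul_add_one hm a b h
  · exact ZMod.two_mul_ne_two_mul_add_one hm b a (by linear_combination -h)
  · exact ZMod.two_mul_ne_two_mul_add_one hm a b (by linear_combination -h)
  · exact ZMod.two_mul_ne_two_mul_add_one hm b a (by linear_combination h)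

theorem exists_bdmOut_eq_or_eq_bdmFlip {m : ℕ} (v : BDMVertex m) :
    ∃ p, bdmOut m p = v ∨ bdmOut m p = bdmFlip v := by
  obtain ⟨α, j, β⟩ := v
  obtain ⟨q, rfl | rfl⟩ := ZMod.exists_eq_two_mul_or_eq_two_mul_add_one j <;> cases α
  · exact ⟨(true, -q - 1, true), by cases β <;> simp [bdmOut, bdmFlip] <;> ring⟩
  · exact ⟨(false, q, false), by cases β <;> simp [bdmOut, bdmFlip]⟩
  · exact ⟨(true, -q - 1, false), by cases β <;> simp [bdmOut, bdmFlip] <;> ring⟩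
  · exact ⟨(false, q, true), by cases β <;> simp [bdmOut, bdmFlip]⟩

theorem bdmOut_snd_snd {m : ℕ} (v : BDMVertex m) : (bdmOut m v).2.2 = !v.2.2 := by
  obtain ⟨α, i, β⟩ := v
  cases α <;> cases β <;> rfl

theorem exists_hasWalk_le_add_two {M B : ℕ}
    (h : ∀ u v : BDMVertex M, ∃ d ≤ B, hasWalk (bdmStep M) d u v) (u v : BDMVertex (2 * M)) :
    ∃ d ≤ B + 2, hasWalk (bdmStep (2 * M)) d u v := by
  obtain ⟨p, hp⟩ := exists_bdmOut_eq_or_eq_bdmFlip v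
  obtain ⟨d, hd, hw⟩ := h (bdmProj (dvd_mul_left M 2) u) (bdmProj (dvd_mul_left M 2) p)
  obtain ⟨q, hwq, hqp⟩ := hw.lift _ fun _ _ => exists_bdmStep_of_bdmStep_bdmProj _
  have hwp : hasWalk (bdmStep (2 * M)) (d + 1) u (bdmOut (2 * M) p) :=
    hasWalk_succ'.2 ⟨q, hwq, bdmStep_iff.2 (.inr ((bdmOut_eq_bdmOut_iff p q).2 hqp.symm))⟩
  rcases hp with rfl | hp
  · exact ⟨d + 1, by omega, hwp⟩
  · refine ⟨d + 2, by omega, hasWalk_succ'.2 ⟨_, hwp, bdmStep_iff.2 (.inl ?_)⟩⟩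
    rw [hp, bdmFlip_bdmFlip]

theorem eq_bdmOut_of_bdmStep_bdmFlip_bdmOut {m : ℕ} (hm : 2 ∣ m) {w x : BDMVertex m}
    (h : bdmStep m w (bdmFlip (bdmOut m x))) : w = bdmOut m x := by
  rcases bdmStep_iff.1 h with h | h
  · simpa using (congrArg bdmFlip h).symm
  · exact absurd h.symm (bdmOut_ne_bdmFlip_bdmOut hm w x)

theorem eq_bdmFlip_or_bdmProj_eq_of_bdmStep_bdmOut {M : ℕ} {w x : BDMVertex (2 * M)}
    (h : bdmStep (2 * M) w (bdmOut (2 * M) x)) :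
    w = bdmFlip (bdmOut (2 * M) x) ∨
      bdmProj (dvd_mul_left M 2) w = bdmProj (dvd_mul_left M 2) x := by
  rcases bdmStep_iff.1 h with h | h
  · exact .inl (by simpa using (congrArg bdmFlip h).symm)
  · exact .inr ((bdmOut_eq_bdmOut_iff w x).1 h.symm)

theorem not_hasWalk_bdmFlip_bdmOut {M B : ℕ} {x : BDMVertex (2 * M)} (hx : x.2.2 = false)
    (h : ∀ d < B, ¬ hasWalk (bdmStep M) d (false, 0, false) (bdmProj (dvd_mul_left M 2) x)) :
    ∀ d < B + 2,
      ¬ hasWalk (bdmStep (2 * M)) d (false, 0, false) (bdmFlip (bdmOut (2 * M) x)) := by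
  have hm : 2 ∣ 2 * M := dvd_mul_right 2 M
  intro d
  induction d using Nat.strong_induction_on with
  | _ d ih =>
  intro hd hw
  match d, hw with
  | 0, hw =>
    refine bdmOut_ne_bdmFlip_bdmOut hm (true, -1, true) x (Eq.trans ?_ hw)
    simp [bdmOut]
  | 1, hw =>
    obtain ⟨w, hw, hs⟩ := hasWalk_succ'.1 hw
    have := congrArg (·.2.2) (hw.trans (eq_bdmOut_of_bdmStep_bdmFlip_bdmOut hm hs))
    simp [bdmOut_snd_snd, hx] at this
  | d + 2, hw =>
    obtain ⟨w, hw, hs⟩ := hasWalk_succ'.1 hw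
    obtain ⟨w', hw', hs'⟩ := hasWalk_succ'.1 (eq_bdmOut_of_bdmStep_bdmFlip_bdmOut hm hs ▸ hw)
    rcases eq_bdmFlip_or_bdmProj_eq_of_bdmStep_bdmOut hs' with rfl | hproj
    · exact ih d (by omega) (by omega) hw'
    · refine h d (by omega) (hproj ▸ ?_)
      simpa [bdmProj] using hw'.map (bdmProj (dvd_mul_left M 2)) fun _ _ => bdmStep_bdmProj _

theorem exists_hasWalk_le_of_five_mul_two_pow (k : ℕ) :
    ∀ u v : BDMVertex (5 * 2 ^ k), ∃ d ≤ 2 * k + 6, hasWalk (bdmStep (5 * 2 ^ k)) d u v := by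
  induction k with
  | zero => decide
  | succ k ih =>
    rw [show 5 * 2 ^ (k + 1) = 2 * (5 * 2 ^ k) by ring]
    exact exists_hasWalk_le_add_two ih

theorem exists_not_hasWalk_lt_of_five_mul_two_pow (k : ℕ) :
    ∃ v : BDMVertex (5 * 2 ^ k), v.2.2 = false ∧
      ∀ d < 2 * k + 6, ¬ hasWalk (bdmStep (5 * 2 ^ k)) d (false, 0, false) v := by
  induction k with
  | zero => exact ⟨(true, 3, false), rfl, by decide⟩
  | succ k ih =>
    obtain ⟨v, hv, hfar⟩ := ih
    rw [show 5 * 2 ^ (k + 1) = 2 * (5 * 2 ^ k) by ring]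
    obtain ⟨x, rfl⟩ := bdmProj_surjective (dvd_mul_left _ 2) v
    refine ⟨bdmFlip (bdmOut _ x), ?_, not_hasWalk_bdmFlip_bdmOut hv hfar⟩
    simpa [bdmFlip, bdmOut_snd_snd, bdmProj] using hv

/-- For $n ≥ 3$ and $m = 2^{n-1} + 2^{n-3}$, the diameter of $BDM(2,m)$ is exactly $2n$:
every ordered pair of vertices is joined by a directed walk of length at most $2n$
in the associated digraph, and some ordered pair has no directed walk of length
less than $2n$. -/
theorem BDM_diameter_eq_two_n (n m : ℕ) (hn : 3 ≤ n)
    (hm : m = 2 ^ (n - 1) + 2 ^ (n - 3)) :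
    (∀ u v : BDMVertex m, ∃ d ≤ 2 * n, hasWalk (bdmStep m) d u v) ∧
    (∃ u v : BDMVertex m, ∀ d < 2 * n, ¬ hasWalk (bdmStep m) d u v) := by
  obtain ⟨k, rfl⟩ : ∃ k, n = k + 3 := ⟨n - 3, by omega⟩
  obtain rfl : m = 5 * 2 ^ k := by rw [hm, show k + 3 - 1 = k + 2 by omega]; simp; ring
  refine ⟨fun u v => ?_, ?_⟩
  · obtain ⟨d, hd, hw⟩ := exists_hasWalk_le_of_five_mul_two_pow k u v
    exact ⟨d, by omega, hw⟩
  · obtain ⟨v, -, hv⟩ := exists_not_hasWalk_lt_of_five_mul_two_pow k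
    exact ⟨_, v, fun d hd => hv d (by omega)⟩
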